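/- For the cooperative Parrondo Markov chain on {0,1}^N with parameters p_0 = 1, p_3 = 0, and N even, the two alternating states 0101⋯01 and 1010⋯10 are absorbing, and (when 0 < p_1 + p_2 < 2 excluding the exceptional cases p_1 = p_2 = 0 and p_1 = p_2 = 1) all other states are transient. -/

import Mathlib

namespace Stmt2

variable {N : ℕ}

/-- `x` with coordinate `i` flipped. -/
def flip (x : Fin N → Bool) (i : Fin N) : Fin N → Bool := Function.update x i (!x i)

/-- `m_i(x) = 2 x_{i-1} + x_{i+1}` with circular indexing. -/
def mIdx [NeZero N] (x : Fin N → Bool) (i : Fin N) : Fin 4 :=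
  (if x (i - 1) then 2 else 0) + (if x (i + 1) then 1 else 0)

/-- flip rate: `p_{m_i(x)}` if `x_i = 0`, `q_{m_i(x)} = 1 - p_{m_i(x)}` if `x_i = 1`. -/
noncomputable def rate [NeZero N] (p : Fin 4 → ℝ) (x : Fin N → Bool) (i : Fin N) : ℝ :=
  if x i then 1 - p (mIdx x i) else p (mIdx x i)

/-- One-step transition matrix of the cooperative Parrondo chain:
`P(x, x^i) = rate/N` and `P(x,x) = (∑_i (1 - rate_i))/N`. -/
noncomputable def Pmat [NeZero N] (p : Fin 4 → ℝ) : Matrix (Fin N → Bool) (Fin N → Bool) ℝ :=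
  fun x y => (∑ i : Fin N, if y = flip x i then rate p x i else 0) / N
    + (if y = x then (∑ i : Fin N, (1 - rate p x i)) / N else 0)

/-- `y` is accessible from `x`. -/
def Accessible [NeZero N] (p : Fin 4 → ℝ) (x y : Fin N → Bool) : Prop :=
  ∃ n : ℕ, 0 < (Pmat p ^ n) x y

/-- Transience of a state of a finite Markov chain, in the standard equivalent form:
some state is accessible from `x` from which `x` is not accessible back. -/
def Transient [NeZero N] (p : Fin 4 → ℝ) (x : Fin N → Bool) : Prop :=
  ∃ y : Fin N → Bool, Accessible p x y ∧ ¬ Accessible p y x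

/-- The alternating state starting with value `b` at index 0. -/
def altStart (N : ℕ) (b : Bool) : Fin N → Bool := fun i => if i.val % 2 = 0 then b else !b

/-! A bond of `x` is an index `j` with `x j = x (j + 1)`. With `p 0 = 1` and `p 3 = 0` the rate
vanishes at every site differing from both neighbours, so the bond-free (alternating) states are
absorbing, while a site agreeing with both neighbours flips with rate one, removing two bonds. When
`0 < p 1` and `p 2 < 1`, a site agreeing only with its left neighbour flips with positive rate,
which moves a bond one step to the right. On a ring of even length the number of bonds is even, so
a bond can always be pushed onto the next one and annihilated with it: every state reaches an
alternating state, from which nothing else is accessible. If instead `0 < p 2` and `p 1 < 1`,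
reflecting the ring swaps the roles of `p 1` and `p 2`. -/

section NonnegMatrix

variable {ι : Type*} [Fintype ι] [DecidableEq ι] {A : Matrix ι ι ℝ}

theorem Matrix.exists_pow_apply_pos_of_reflTransGen (hA : ∀ i j, 0 ≤ A i j) {x y : ι}
    (h : Relation.ReflTransGen (fun i j => 0 < A i j) x y) : ∃ n, 0 < (A ^ n) x y := by
  induction h using Relation.ReflTransGen.head_induction_on with
  | refl => exact ⟨0, by simp⟩
  | head hxz _ ih =>
    obtain ⟨n, hn⟩ := ih
    refine ⟨n + 1, ?_⟩
    rw [pow_succ', Matrix.mul_apply]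
    exact Finset.sum_pos' (fun w _ => mul_nonneg (hA _ w) (Matrix.pow_apply_nonneg hA n w _))
      ⟨_, Finset.mem_univ _, mul_pos hxz hn⟩

theorem Matrix.pow_apply_eq_zero_of_row {a : ι} (ha : ∀ z, z ≠ a → A a z = 0) (n : ℕ) {z : ι}
    (hz : z ≠ a) : (A ^ n) a z = 0 := by
  induction n generalizing z with
  | zero => exact Matrix.one_apply_ne hz.symm
  | succ n ih =>
    rw [pow_succ', Matrix.mul_apply]
    refine Finset.sum_eq_zero fun w _ => ?_
    rcases eq_or_ne w a with rfl | hw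
    · rw [ih hz, mul_zero]
    · rw [ha w hw, zero_mul]

end NonnegMatrix

theorem flip_apply (x : Fin N → Bool) (i j : Fin N) :
    flip x i j = if j = i then !x i else x j := by
  simp [flip, Function.update_apply]

theorem flip_injective (x : Fin N → Bool) : Function.Injective (flip x) := by
  intro i j h
  by_contra hij
  simpa [flip_apply, hij] using congrFun h i

theorem flip_ne_self (x : Fin N → Bool) (i : Fin N) : flip x i ≠ x := by
  intro h
  simpa [flip_apply] using congrFun h i

def rev (x : Fin N → Bool) : Fin N → Bool := fun i => x (-i)

theorem rev_rev (x : Fin N → Bool) : rev (rev x) = x := by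
  funext i
  simp [rev]

theorem rev_injective : Function.Injective (rev : (Fin N → Bool) → Fin N → Bool) :=
  Function.LeftInverse.injective rev_rev

theorem rev_flip (x : Fin N → Bool) (i : Fin N) : rev (flip x i) = flip (rev x) (-i) := by
  funext j
  simp [rev, flip_apply, neg_eq_iff_eq_neg]

section Cycle

open Fin.CommRing

variable [NeZero N]

theorem nontrivial_of_even (hN : Even N) : Nontrivial (Fin N) := by
  obtain ⟨k, rfl⟩ := hN
  have := NeZero.ne (k + k)
  exact Fin.nontrivial_iff_two_le.mpr (by omega)

theorem altStart_add_one (hN : Even N) (b : Bool) (i : Fin N) :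
    altStart N b (i + 1) = !altStart N b i := by
  have hpar : (i + 1).val % 2 = (i.val + 1) % 2 := by
    simp [Fin.val_add, Nat.mod_mod_of_dvd _ hN.two_dvd, Nat.add_mod]
  rcases Nat.mod_two_eq_zero_or_one i.val with hi | hi <;>
    simp [altStart, hpar, hi, Nat.succ_mod_two_eq_zero_iff]

theorem altStart_sub_one (hN : Even N) (b : Bool) (i : Fin N) :
    altStart N b (i - 1) = !altStart N b i := by
  simpa using (congrArg (!·) (altStart_add_one hN b (i - 1))).symm

def bonds (x : Fin N → Bool) : Finset (Fin N) :=
  Finset.univ.filter fun j => x j = x (j + 1)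

theorem mem_bonds {x : Fin N → Bool} {j : Fin N} : j ∈ bonds x ↔ x j = x (j + 1) := by
  simp [bonds]

theorem mem_bonds_flip {x : Fin N → Bool} {i j : Fin N} (hj : j ≠ i) (hj' : j + 1 ≠ i) :
    j ∈ bonds (flip x i) ↔ j ∈ bonds x := by
  simp [mem_bonds, flip_apply, hj, hj']

theorem bonds_rev_eq_empty {x : Fin N → Bool} (hx : bonds x = ∅) : bonds (rev x) = ∅ := by
  refine Finset.eq_empty_of_forall_notMem fun j hj => ?_
  have : -j - 1 ∈ bonds x := by
    rw [mem_bonds, sub_add_cancel, ← neg_add']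
    exact (mem_bonds.mp hj).symm
  exact Finset.notMem_empty _ (hx ▸ this)

theorem eq_altStart_of_bonds_eq_empty {x : Fin N → Bool} (hx : bonds x = ∅) :
    x = altStart N (x 0) := by
  have hsucc (j : Fin N) : x (j + 1) = !x j := by
    have : j ∉ bonds x := hx ▸ Finset.notMem_empty j
    rw [mem_bonds] at this
    exact Bool.eq_not_iff.mpr (Ne.symm this)
  have hcast (k : ℕ) : x k = if k % 2 = 0 then x 0 else !x 0 := by
    induction k with
    | zero => simp
    | succ k ih =>
      rw [Nat.cast_succ, hsucc, ih]
      rcases Nat.mod_two_eq_zero_or_one k with hk | hk <;> simp [hk, Nat.succ_mod_two_eq_zero_iff]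
  funext i
  simpa [altStart] using hcast i

theorem even_card_bonds (hN : Even N) (x : Fin N → Bool) : Even (bonds x).card := by
  let f : Fin N → ZMod 2 := fun j => if x j then 1 else 0
  have hcycle : ∑ j, (f j + f (j + 1)) = 0 := by
    have hshift : ∑ j, f (j + 1) = ∑ j, f j := Equiv.sum_comp (Equiv.addRight 1) f
    rw [Finset.sum_add_distrib, hshift, ← two_mul]
    exact zero_mul _
  have hterm (j : Fin N) : f j + f (j + 1) = if x j = x (j + 1) then 0 else 1 := by
    simp only [f]
    cases x j <;> cases x (j + 1) <;> decide
  have hbreaks : Even (Finset.univ.filter fun j => ¬ x j = x (j + 1)).card := by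
    rw [← ZMod.natCast_eq_zero_iff_even, ← hcycle, Finset.sum_congr rfl fun j _ => hterm j,
      Finset.sum_ite, Finset.sum_const_zero, zero_add, Finset.sum_const, nsmul_one]
  have htotal := Finset.card_filter_add_card_filter_not (s := Finset.univ) fun j => x j = x (j + 1)
  rw [Finset.card_univ, Fintype.card_fin] at htotal
  rw [← htotal] at hN
  exact (Nat.even_add.mp hN).mpr hbreaks

section FlipBond

variable [Nontrivial (Fin N)] {x : Fin N → Bool} {j : Fin N}

theorem mem_bonds_flip_self : j ∈ bonds (flip x j) ↔ j ∉ bonds x := by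
  simp [mem_bonds, flip_apply, Bool.eq_not_iff]

theorem bonds_flip_succ_subset (hj : j ∈ bonds x) :
    bonds (flip x (j + 1)) ⊆ insert (j + 1) ((bonds x).erase j) := by
  intro m hm
  rw [mem_bonds] at hj hm
  rcases eq_or_ne m (j + 1) with rfl | hm1
  · exact Finset.mem_insert_self _ _
  have hmj : m ≠ j := by
    rintro rfl
    simp [flip_apply, hj] at hm
  have hm1' : m + 1 ≠ j + 1 := fun h => hmj (add_right_cancel h)
  simp only [flip_apply, hm1, hm1', if_false] at hm
  exact Finset.mem_insert_of_mem (Finset.mem_erase.mpr ⟨hmj, mem_bonds.mpr hm⟩)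

theorem card_bonds_flip_succ_le (hj : j ∈ bonds x) :
    (bonds (flip x (j + 1))).card ≤ (bonds x).card :=
  (Finset.card_le_card (bonds_flip_succ_subset hj)).trans <|
    (Finset.card_insert_le _ _).trans_eq (Finset.card_erase_add_one hj)

theorem card_bonds_flip_succ_lt (hj : j ∈ bonds x) (hj1 : j + 1 ∈ bonds x) :
    (bonds (flip x (j + 1))).card < (bonds x).card := by
  have hsub := bonds_flip_succ_subset hj
  rw [Finset.insert_eq_of_mem (Finset.mem_erase.mpr ⟨by simp, hj1⟩)] at hsub
  exact (Finset.card_le_card hsub).trans_lt (Finset.card_erase_lt_of_mem hj)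

end FlipBond

section Descent

variable {S : (Fin N → Bool) → (Fin N → Bool) → Prop}
  (hsame : ∀ x i, x (i - 1) = x i → x (i + 1) = x i → S x (flip x i))
  (hleft : ∀ x i, x (i - 1) = x i → x (i + 1) ≠ x i → S x (flip x i))
include hsame hleft

theorem rel_flip_succ_of_mem_bonds {x : Fin N → Bool} {j : Fin N} (hj : j ∈ bonds x) :
    S x (flip x (j + 1)) := by
  have hl : x (j + 1 - 1) = x (j + 1) := by simpa using mem_bonds.mp hj
  by_cases hr : x (j + 1 + 1) = x (j + 1)
  · exact hsame x _ hl hr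
  · exact hleft x _ hl hr

theorem exists_reflTransGen_card_bonds_lt [Nontrivial (Fin N)] (n : ℕ) :
    ∀ (x : Fin N → Bool) (j d : Fin N), d.val = n → d ≠ 0 → j ∈ bonds x → j + d ∈ bonds x →
      ∃ y, Relation.ReflTransGen S x y ∧ (bonds y).card < (bonds x).card := by
  induction n with
  | zero => exact fun x j d hd hd0 => absurd (Fin.ext hd) hd0
  | succ n ih =>
    intro x j d hd hd0 hj hjd
    have hstep := rel_flip_succ_of_mem_bonds hsame hleft hj
    by_cases hj1 : j + 1 ∈ bonds x
    · exact ⟨_, .single hstep, card_bonds_flip_succ_lt hj hj1⟩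
    have hd1 : d ≠ 1 := by
      rintro rfl
      exact hj1 hjd
    have hjd' : j + 1 + (d - 1) ∈ bonds (flip x (j + 1)) := by
      rw [add_add_sub_cancel, mem_bonds_flip (by simpa using hd1) (by simpa using hd0)]
      exact hjd
    obtain ⟨y, hxy, hy⟩ := ih (flip x (j + 1)) (j + 1) (d - 1)
      (by rw [Fin.val_sub_one_of_ne_zero hd0, hd]; rfl) (sub_ne_zero.mpr hd1)
      (mem_bonds_flip_self.mpr hj1) hjd'
    exact ⟨y, .head hstep hxy, hy.trans_le (card_bonds_flip_succ_le hj)⟩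

theorem exists_reflTransGen_bonds_eq_empty (hN : Even N) (x : Fin N → Bool) :
    ∃ y, Relation.ReflTransGen S x y ∧ bonds y = ∅ := by
  have := nontrivial_of_even hN
  induction hn : (bonds x).card using Nat.strong_induction_on generalizing x with
  | _ n ih =>
  obtain hx | ⟨j, hj⟩ := (bonds x).eq_empty_or_nonempty
  · exact ⟨x, .refl, hx⟩
  have hcard : 1 < (bonds x).card := by
    have := Finset.card_pos.mpr ⟨j, hj⟩
    obtain ⟨k, hk⟩ := even_card_bonds hN x
    omega
  obtain ⟨k, hk, hkj⟩ := (bonds x).exists_mem_ne hcard j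
  obtain ⟨y, hxy, hy⟩ := exists_reflTransGen_card_bonds_lt hsame hleft _ x j (k - j) rfl
    (sub_ne_zero.mpr hkj) hj (by rwa [add_sub_cancel])
  obtain ⟨z, hyz, hz⟩ := ih _ (hn ▸ hy) y rfl
  exact ⟨z, hxy.trans hyz, hz⟩

end Descent

variable {p : Fin 4 → ℝ} {x : Fin N → Bool} {i : Fin N}

theorem rate_mem_Icc (hp : ∀ m, p m ∈ Set.Icc (0 : ℝ) 1) (x : Fin N → Bool) (i : Fin N) :
    rate p x i ∈ Set.Icc (0 : ℝ) 1 := by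
  obtain ⟨h0, h1⟩ := hp (mIdx x i)
  unfold rate
  split <;> constructor <;> linarith

theorem rate_eq_zero_of_ne_neighbors (hp0 : p 0 = 1) (hp3 : p 3 = 0) (hl : x (i - 1) ≠ x i)
    (hr : x (i + 1) ≠ x i) : rate p x i = 0 := by
  unfold rate mIdx
  generalize x (i - 1) = l at *; generalize x (i + 1) = r at *; generalize x i = c at *
  cases l <;> cases r <;> cases c <;> simp_all

theorem rate_pos_of_eq_neighbors (hp0 : p 0 = 1) (hp3 : p 3 = 0) (hl : x (i - 1) = x i)
    (hr : x (i + 1) = x i) : 0 < rate p x i := by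
  unfold rate mIdx
  generalize x (i - 1) = l at *; generalize x (i + 1) = r at *; generalize x i = c at *
  cases l <;> cases r <;> cases c <;> simp_all

theorem rate_pos_of_eq_left_ne_right (hp1 : 0 < p 1) (hp2 : p 2 < 1) (hl : x (i - 1) = x i)
    (hr : x (i + 1) ≠ x i) : 0 < rate p x i := by
  unfold rate mIdx
  generalize x (i - 1) = l at *; generalize x (i + 1) = r at *; generalize x i = c at *
  cases l <;> cases r <;> cases c <;> simp_all

theorem rate_altStart (hN : Even N) (hp0 : p 0 = 1) (hp3 : p 3 = 0) (b : Bool) (i : Fin N) :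
    rate p (altStart N b) i = 0 :=
  rate_eq_zero_of_ne_neighbors hp0 hp3 (by simp [altStart_sub_one hN])
    (by simp [altStart_add_one hN])

theorem mIdx_rev (x : Fin N → Bool) (i : Fin N) :
    mIdx (rev x) (-i) = Equiv.swap 1 2 (mIdx x i) := by
  have hl : rev x (-i - 1) = x (i + 1) := by simp [rev, add_comm]
  have hr : rev x (-i + 1) = x (i - 1) := by simp [rev, neg_add_eq_sub]
  unfold mIdx
  rw [hl, hr]
  cases x (i - 1) <;> cases x (i + 1) <;> decide

theorem rate_rev (x : Fin N → Bool) (i : Fin N) :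
    rate p (rev x) (-i) = rate (p ∘ Equiv.swap 1 2) x i := by
  simp [rate, mIdx_rev, rev]

theorem Pmat_nonneg (hp : ∀ m, p m ∈ Set.Icc (0 : ℝ) 1) (x y : Fin N → Bool) :
    0 ≤ Pmat p x y := by
  have hrate := rate_mem_Icc hp x
  exact add_nonneg
    (div_nonneg (Finset.sum_nonneg fun i _ => ite_nonneg (hrate i).1 le_rfl) N.cast_nonneg)
    (ite_nonneg (div_nonneg (Finset.sum_nonneg fun i _ => sub_nonneg.mpr (hrate i).2)
      N.cast_nonneg) le_rfl)

theorem Pmat_flip (x : Fin N → Bool) (i : Fin N) : Pmat p x (flip x i) = rate p x i / N := by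
  simp [Pmat, flip_ne_self, (flip_injective x).eq_iff]

theorem Pmat_flip_pos (h : 0 < rate p x i) : 0 < Pmat p x (flip x i) := by
  rw [Pmat_flip]
  exact div_pos h (Nat.cast_pos.mpr (Nat.pos_of_neZero N))

theorem Pmat_of_rate_eq_zero (h : ∀ i, rate p x i = 0) (y : Fin N → Bool) :
    Pmat p x y = if y = x then 1 else 0 := by
  have hN : (N : ℝ) ≠ 0 := Nat.cast_ne_zero.mpr (NeZero.ne N)
  simp [Pmat, h, hN]

theorem Pmat_rev (x y : Fin N → Bool) :
    Pmat p (rev x) (rev y) = Pmat (p ∘ Equiv.swap 1 2) x y := by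
  have hflips : ∑ i, (if rev y = flip (rev x) i then rate p (rev x) i else 0) =
      ∑ i, if y = flip x i then rate (p ∘ Equiv.swap 1 2) x i else 0 := by
    rw [← Equiv.sum_comp (Equiv.neg (Fin N))]
    simp only [Equiv.neg_apply, ← rev_flip, rev_injective.eq_iff, rate_rev]
  have hstay : ∑ i, (1 - rate p (rev x) i) = ∑ i, (1 - rate (p ∘ Equiv.swap 1 2) x i) := by
    rw [← Equiv.sum_comp (Equiv.neg (Fin N))]
    simp only [Equiv.neg_apply, rate_rev]
  simp only [Pmat, hflips, hstay, rev_injective.eq_iff]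

theorem exists_reflTransGen_Pmat_pos_bonds_eq_empty_of_left (hN : Even N) (hp0 : p 0 = 1)
    (hp3 : p 3 = 0) (hp1 : 0 < p 1) (hp2 : p 2 < 1) (x : Fin N → Bool) :
    ∃ y, Relation.ReflTransGen (fun u v => 0 < Pmat p u v) x y ∧ bonds y = ∅ :=
  exists_reflTransGen_bonds_eq_empty
    (fun _ _ hl hr => Pmat_flip_pos (rate_pos_of_eq_neighbors hp0 hp3 hl hr))
    (fun _ _ hl hr => Pmat_flip_pos (rate_pos_of_eq_left_ne_right hp1 hp2 hl hr)) hN x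

theorem exists_reflTransGen_Pmat_pos_bonds_eq_empty (hN : Even N)
    (hp : ∀ m, p m ∈ Set.Icc (0 : ℝ) 1) (hp0 : p 0 = 1) (hp3 : p 3 = 0)
    (hpos : 0 < p 1 + p 2) (hlt : p 1 + p 2 < 2) (x : Fin N → Bool) :
    ∃ y, Relation.ReflTransGen (fun u v => 0 < Pmat p u v) x y ∧ bonds y = ∅ := by
  by_cases hleft : 0 < p 1 ∧ p 2 < 1
  · exact exists_reflTransGen_Pmat_pos_bonds_eq_empty_of_left hN hp0 hp3 hleft.1 hleft.2 x
  have hright : 0 < p 2 ∧ p 1 < 1 := by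
    obtain ⟨⟨h1, h1'⟩, ⟨h2, h2'⟩⟩ := And.intro (hp 1) (hp 2)
    rw [not_and_or, not_lt, not_lt] at hleft
    rcases hleft with h | h <;> constructor <;> linarith
  obtain ⟨y, hxy, hy⟩ := exists_reflTransGen_Pmat_pos_bonds_eq_empty_of_left
    (p := p ∘ Equiv.swap 1 2) hN (by simpa [Equiv.swap_apply_of_ne_of_ne] using hp0)
    (by simpa [Equiv.swap_apply_of_ne_of_ne] using hp3) (by simpa using hright.1)
    (by simpa using hright.2) (rev x)
  refine ⟨rev y, ?_, bonds_rev_eq_empty hy⟩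
  rw [← rev_rev x]
  exact hxy.lift rev fun u v huv => show 0 < Pmat p (rev u) (rev v) by rwa [Pmat_rev]

end Cycle

theorem stmt_2_general [NeZero N] (hNeven : Even N)
    (p : Fin 4 → ℝ) (hp : ∀ m, p m ∈ Set.Icc (0:ℝ) 1)
    (hp0 : p 0 = 1) (hp3 : p 3 = 0)
    (hsum_pos : 0 < p 1 + p 2) (hsum_lt : p 1 + p 2 < 2) :
    (∀ b : Bool, Pmat p (altStart N b) (altStart N b) = 1) ∧
    (∀ x : Fin N → Bool, x ≠ altStart N true → x ≠ altStart N false →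
      Transient p x) := by
  have hrow (b : Bool) := Pmat_of_rate_eq_zero (rate_altStart (p := p) hNeven hp0 hp3 b)
  refine ⟨fun b => by simp [hrow], fun x hx1 hx0 => ?_⟩
  obtain ⟨y, hxy, hy⟩ :=
    exists_reflTransGen_Pmat_pos_bonds_eq_empty hNeven hp hp0 hp3 hsum_pos hsum_lt x
  rw [eq_altStart_of_bonds_eq_empty hy] at hxy
  refine ⟨_, Matrix.exists_pow_apply_pos_of_reflTransGen (Pmat_nonneg hp) hxy, ?_⟩
  rintro ⟨n, hn⟩
  have hx : x ≠ altStart N (y 0) := by cases y 0 <;> assumption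
  rw [Matrix.pow_apply_eq_zero_of_row (fun z hz => by simp [hrow, hz]) n hx] at hn
  exact hn.false

/-- for `p_0 = 1`, `p_3 = 0`, `N` even, the two alternating states
`0101⋯01` and `1010⋯10` are absorbing, and when `0 < p_1 + p_2 < 2`
(equivalently, excluding `p_1 = p_2 = 0` and `p_1 = p_2 = 1`) all other states
are transient. -/
theorem stmt_2 [NeZero N] (hN : 3 ≤ N) (hNeven : Even N)
    (p : Fin 4 → ℝ) (hp : ∀ m, p m ∈ Set.Icc (0:ℝ) 1)
    (hp0 : p 0 = 1) (hp3 : p 3 = 0)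
    (hsum_pos : 0 < p 1 + p 2) (hsum_lt : p 1 + p 2 < 2) :
    (∀ b : Bool, Pmat p (altStart N b) (altStart N b) = 1) ∧
    (∀ x : Fin N → Bool, x ≠ altStart N true → x ≠ altStart N false →
      Transient p x) :=
  stmt_2_general hNeven p hp hp0 hp3 hsum_pos hsum_lt

end Stmt2
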